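/- The map ψ(x,y,z) = (xy, xz, y² − z², 2yz) on the unit sphere identifies exactly antipodal points: ψ(p) = ψ(q) implies q = p or q = −p. -/
import Mathlib


lemma aux_sum_sq_zero {u v w : ℝ} (h : u^2+v^2+w^2 = 0) : u = 0 ∧ v = 0 ∧ w = 0 := by
  refine ⟨?_,?_,?_⟩ <;> nlinarith [sq_nonneg u, sq_nonneg v, sq_nonneg w]

def psiMap (p : ℝ × ℝ × ℝ) : ℝ × ℝ × ℝ × ℝ :=
  (p.1 * p.2.1, p.1 * p.2.2, p.2.1 ^ 2 - p.2.2 ^ 2, 2 * p.2.1 * p.2.2)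

theorem stmt_8 (p q : ℝ × ℝ × ℝ)
    (hp : p.1 ^ 2 + p.2.1 ^ 2 + p.2.2 ^ 2 = 1)
    (hq : q.1 ^ 2 + q.2.1 ^ 2 + q.2.2 ^ 2 = 1)
    (h : psiMap p = psiMap q) : q = p ∨ q = -p := by
  obtain ⟨x, y, z⟩ := p
  obtain ⟨a, b, c⟩ := q
  simp only [psiMap, Prod.mk.injEq] at h hp hq ⊢
  obtain ⟨h1, h2, h3, h4⟩ := h
  -- b²+c² = y²+z²
  have hbc : b ^ 2 + c ^ 2 = y ^ 2 + z ^ 2 := by nlinarith [sq_nonneg (b^2+c^2+y^2+z^2), sq_nonneg (b^2+c^2-y^2-z^2), sq_nonneg (b*z-c*y), sq_nonneg (b*z+c*y)]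
  have hb : b ^ 2 = y ^ 2 := by nlinarith
  have hc : c ^ 2 = z ^ 2 := by nlinarith
  have ha : a ^ 2 = x ^ 2 := by nlinarith
  have hd : (x*a + y*b + z*c) ^ 2 = 1 := by nlinarith [h1, h2, h4, hp]
  have hd0 : (x*a + y*b + z*c - 1) * (x*a + y*b + z*c + 1) = 0 := by nlinarith
  rcases mul_eq_zero.mp hd0 with h5 | h5
  · left
    have hsum : (a-x)^2 + (b-y)^2 + (c-z)^2 = 0 := by linear_combination hq + hp - 2*h5
    obtain ⟨e1, e2, e3⟩ := aux_sum_sq_zero hsum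
    exact ⟨by linarith, by linarith, by linarith⟩
  · right
    have hsum : (a+x)^2 + (b+y)^2 + (c+z)^2 = 0 := by linear_combination hq + hp + 2*h5
    obtain ⟨e1, e2, e3⟩ := aux_sum_sq_zero hsum
    simp only [Prod.neg_mk, Prod.mk.injEq]
    exact ⟨by linarith, by linarith, by linarith⟩
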